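/- arXiv:2211.08926 — 3 statements merged into one kernel-verified Lean document; each statement's English description precedes it below -/
import Mathlib

section
/- Let F be a field of characteristic 2 and A = (a_{ij}) a 3×3 matrix over F. The determinant of the 4×4 matrix whose rows are f = (a_{21}a_{31}, a_{31}(a_{21}a_{33}+a_{23}a_{31}), a_{21}(a_{21}a_{32}+a_{22}a_{31}), (a_{21}a_{33}+a_{23}a_{31})(a_{21}a_{32}+a_{22}a_{31})), e1 = (0, 0, a_{12}, a_{12}a_{33}+a_{13}a_{32}), e2 = (0, a_{13}, 0, a_{12}a_{23}+a_{13}a_{22}), e3 = (1, a_{33}, a_{22}, a_{22}a_{33}+a_{23}a_{32}) equals (a_{12}a_{23}a_{31} − a_{13}a_{32}a_{21})^2. -/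
/-!
Over any commutative ring, expanding along the first column (two nonzero entries) shows that the
determinant equals `-(x ^ 2 + y ^ 2)` with `x = a₁₂a₂₃a₃₁` and `y = a₁₃a₃₂a₂₁`. In characteristic
`2` the sign disappears and `x ^ 2 + y ^ 2 = (x + y) ^ 2 = (x - y) ^ 2` (Frobenius).
-/

theorem det_eq_neg_sq_add_sq {R : Type*} [CommRing R] (A : Matrix (Fin 3) (Fin 3) R) :
    Matrix.det
      !![A 1 0 * A 2 0,
         A 2 0 * (A 1 0 * A 2 2 + A 1 2 * A 2 0),
         A 1 0 * (A 1 0 * A 2 1 + A 1 1 * A 2 0),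
         (A 1 0 * A 2 2 + A 1 2 * A 2 0) * (A 1 0 * A 2 1 + A 1 1 * A 2 0);
         0, 0, A 0 1, A 0 1 * A 2 2 + A 0 2 * A 2 1;
         0, A 0 2, 0, A 0 1 * A 1 2 + A 0 2 * A 1 1;
         1, A 2 2, A 1 1, A 1 1 * A 2 2 + A 1 2 * A 2 1]
      = -((A 0 1 * A 1 2 * A 2 0) ^ 2 + (A 0 2 * A 2 1 * A 1 0) ^ 2) := by
  simp [Matrix.det_succ_column_zero, Fin.sum_univ_succ, Fin.succAbove]
  ring

theorem stmt_7 (F : Type*) [Field F] [CharP F 2] (A : Matrix (Fin 3) (Fin 3) F) :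
    Matrix.det
      !![A 1 0 * A 2 0,
         A 2 0 * (A 1 0 * A 2 2 + A 1 2 * A 2 0),
         A 1 0 * (A 1 0 * A 2 1 + A 1 1 * A 2 0),
         (A 1 0 * A 2 2 + A 1 2 * A 2 0) * (A 1 0 * A 2 1 + A 1 1 * A 2 0);
         0, 0, A 0 1, A 0 1 * A 2 2 + A 0 2 * A 2 1;
         0, A 0 2, 0, A 0 1 * A 1 2 + A 0 2 * A 1 1;
         1, A 2 2, A 1 1, A 1 1 * A 2 2 + A 1 2 * A 2 1]
      = (A 0 1 * A 1 2 * A 2 0 - A 0 2 * A 2 1 * A 1 0) ^ 2 := by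
  rw [det_eq_neg_sq_add_sq, CharTwo.neg_eq, CharTwo.sub_eq_add, CharTwo.add_sq]
end

section
/- Let F be a finite field of characteristic 2 and A = (a_{ij}) a 3×3 matrix over F with a_{12}a_{23}a_{31} = a_{13}a_{32}a_{21} and a_{12}a_{23}a_{31} ≠ 0. Then there exists an invertible diagonal matrix G = diag(g_1, g_2, g_3) over F such that G^{-1} A G is symmetric. -/
theorem stmt_11 (F : Type*) [Field F] [Fintype F] [CharP F 2]
    (A : Matrix (Fin 3) (Fin 3) F)
    (h1 : A 0 1 * A 1 2 * A 2 0 = A 0 2 * A 2 1 * A 1 0)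
    (h2 : A 0 1 * A 1 2 * A 2 0 ≠ 0) :
    ∃ g : Fin 3 → F, (∀ i, g i ≠ 0) ∧
      ((Matrix.diagonal g)⁻¹ * A * Matrix.diagonal g).IsSymm := by
  have h01 : A 0 1 ≠ 0 := fun h => h2 (by rw [h]; ring)
  have h12 : A 1 2 ≠ 0 := fun h => h2 (by rw [h]; ring)
  have h20 : A 2 0 ≠ 0 := fun h => h2 (by rw [h]; ring)
  have h2' : A 0 2 * A 2 1 * A 1 0 ≠ 0 := h1 ▸ h2
  have h02 : A 0 2 ≠ 0 := fun h => h2' (by rw [h]; ring)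
  have h21 : A 2 1 ≠ 0 := fun h => h2' (by rw [h]; ring)
  have h10 : A 1 0 ≠ 0 := fun h => h2' (by rw [h]; ring)
  have hchar : ringChar F = 2 := by
    rw [ringChar.eq_iff]; infer_instance
  obtain ⟨s, hs⟩ := FiniteField.isSquare_of_char_two hchar (A 1 0 / A 0 1)
  obtain ⟨t, ht⟩ := FiniteField.isSquare_of_char_two hchar (A 2 0 / A 0 2)
  have hsne : s ≠ 0 := by
    intro h; rw [h, mul_zero] at hs
    exact (div_ne_zero h10 h01) hs
  have htne : t ≠ 0 := by
    intro h; rw [h, mul_zero] at ht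
    exact (div_ne_zero h20 h02) ht
  have hA01 : A 0 1 * (s * s) = A 1 0 := by
    have hs' := hs
    field_simp at hs'; linear_combination -hs'
  have hA02 : A 0 2 * (t * t) = A 2 0 := by
    have ht' := ht
    field_simp at ht'; linear_combination -ht'
  have hA12 : A 1 2 * (t * t) = A 2 1 * (s * s) := by
    have hx : A 1 2 * (A 2 0 / A 0 2) = A 2 1 * (A 1 0 / A 0 1) := by
      field_simp
      linear_combination h1
    rw [hs, ht] at hx
    exact hx
  set g : Fin 3 → F := ![1, s, t] with hg
  have hgne : ∀ i, g i ≠ 0 := by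
    intro i; fin_cases i <;> simp [hg, hsne, htne]
  have hginv : (Matrix.diagonal g)⁻¹ = Matrix.diagonal (fun i => (g i)⁻¹) := by
    apply Matrix.inv_eq_right_inv
    rw [Matrix.diagonal_mul_diagonal]
    convert Matrix.diagonal_one using 2
    ext i
    exact mul_inv_cancel₀ (hgne i)
  refine ⟨g, hgne, ?_⟩
  rw [hginv, Matrix.IsSymm]
  ext i j
  rw [Matrix.transpose_apply, Matrix.mul_diagonal, Matrix.mul_diagonal,
    Matrix.diagonal_mul, Matrix.diagonal_mul]
  have key : ∀ i j : Fin 3, A j i * g i * g i = A i j * g j * g j := by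
    intro i j
    fin_cases i <;> fin_cases j
    · ring
    · show A 1 0 * 1 * 1 = A 0 1 * s * s; linear_combination -hA01
    · show A 2 0 * 1 * 1 = A 0 2 * t * t; linear_combination -hA02
    · show A 0 1 * s * s = A 1 0 * 1 * 1; linear_combination hA01
    · ring
    · show A 2 1 * s * s = A 1 2 * t * t; linear_combination -hA12
    · show A 0 2 * t * t = A 2 0 * 1 * 1; linear_combination hA02
    · show A 1 2 * t * t = A 2 1 * s * s; linear_combination hA12
    · ring
  have hk := key i j
  have hgi := hgne i
  have hgj := hgne j
  field_simp
  linear_combination hk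
end

section
/- Let F be a field of characteristic p > 0 and let M be a circulant matrix of size p^n × p^n over F with first row (c_0, c_1, …, c_{p^n − 1}). Then det M = (c_0 + c_1 + ⋯ + c_{p^n − 1})^{p^n}. -/
/-!
The matrix is the circulant `circulant v` with `v k = c (-k)`, and circulants indexed by an abelian
group `G` commute. Writing `circulant v = ∑ g, circulant (Pi.single g (v g))`, Frobenius therefore
distributes over the sum, and since `p ^ n • g = 0` in `G` each summand's `p ^ n`-th power is the
scalar matrix `v g ^ p ^ n`. Hence `(circulant v) ^ p ^ n = (∑ g, v g) ^ p ^ n • 1`, so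
`det (circulant v) ^ p ^ n = ((∑ g, v g) ^ p ^ n) ^ p ^ n`, and Frobenius is injective on a
reduced ring.
-/

open Matrix

theorem Finset.sum_pow_char_pow_of_commute {R ι : Type*} [Semiring R] {p : ℕ} [Fact p.Prime]
    [CharP R p] (n : ℕ) (s : Finset ι) (f : ι → R)
    (h : ∀ i ∈ s, ∀ j ∈ s, Commute (f i) (f j)) :
    (∑ i ∈ s, f i) ^ p ^ n = ∑ i ∈ s, f i ^ p ^ n := by
  classical
  induction s using Finset.induction_on with
  | empty => simp [zero_pow (pow_pos (Fact.out : p.Prime).pos n).ne']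
  | insert a s ha ih =>
    rw [Finset.sum_insert ha, Finset.sum_insert ha, add_pow_char_pow_of_commute,
      ih fun i hi j hj => h i (by simp [hi]) j (by simp [hj])]
    exact Commute.sum_right _ _ _ fun j hj => h a (by simp) j (by simp [hj])

namespace Matrix

variable {R G : Type*} [Fintype G] [DecidableEq G] [AddCommGroup G]

theorem circulant_single_mul_circulant_single [Semiring R] (a b : G) (x y : R) :
    circulant (Pi.single a x) * circulant (Pi.single b y) =
      circulant (Pi.single (a + b) (x * y)) := by
  rw [circulant_mul, mulVec_single]
  ext i j
  simp [circulant_apply, Pi.single_apply, sub_eq_iff_eq_add]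

theorem circulant_single_pow [Semiring R] (g : G) (x : R) (m : ℕ) :
    circulant (Pi.single g x) ^ m = circulant (Pi.single (m • g) (x ^ m)) := by
  induction m with
  | zero => simp
  | succ m ih => rw [pow_succ, ih, circulant_single_mul_circulant_single, succ_nsmul, pow_succ]

theorem circulant_eq_sum_circulant_single [AddCommMonoid R] (v : G → R) :
    circulant v = ∑ g, circulant (Pi.single g (v g)) := by
  ext i j
  simp [sum_apply, circulant_apply, Pi.single_apply]

theorem circulant_pow_char_pow [CommRing R] {p : ℕ} [Fact p.Prime] [CharP R p] {n : ℕ}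
    (hG : ∀ g : G, p ^ n • g = 0) (v : G → R) :
    circulant v ^ p ^ n = (∑ g, v g) ^ p ^ n • 1 := by
  rw [circulant_eq_sum_circulant_single, Finset.sum_pow_char_pow_of_commute n _
    (fun g => circulant (Pi.single g (v g))) fun _ _ _ _ => circulant_mul_comm _ _]
  simp only [circulant_single_pow, hG, circulant_single, sum_pow_char_pow]
  rw [← map_sum, scalar_apply, smul_one_eq_diagonal]

theorem det_circulant_of_card_eq_prime_pow [CommRing R] [IsReduced R] {p : ℕ} [Fact p.Prime]
    [CharP R p] {n : ℕ} (hG : Fintype.card G = p ^ n) (v : G → R) :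
    (circulant v).det = (∑ g, v g) ^ p ^ n := by
  apply iterateFrobenius_inj R p n
  change (circulant v).det ^ p ^ n = ((∑ g, v g) ^ p ^ n) ^ p ^ n
  rw [← det_pow, circulant_pow_char_pow (fun g => hG ▸ card_nsmul_eq_zero), det_smul, det_one,
    mul_one, hG]

end Matrix

theorem stmt_13 (F : Type*) [Field F] (p n : ℕ) [Fact p.Prime] [CharP F p]
    [NeZero (p ^ n)] (c : ZMod (p ^ n) → F) :
    Matrix.det (Matrix.of fun i j : ZMod (p ^ n) => c (j - i))
      = (∑ k : ZMod (p ^ n), c k) ^ p ^ n := by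
  have hM : (Matrix.of fun i j : ZMod (p ^ n) => c (j - i)) = circulant fun k => c (-k) := by
    ext i j
    simp [circulant_apply]
  rw [hM, det_circulant_of_card_eq_prime_pow (ZMod.card _)]
  congr 1
  exact Equiv.sum_comp (Equiv.neg _) c
end
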